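/- arXiv:2306.13823 — 2 statements merged into one kernel-verified Lean document; each statement's English description precedes it below -/
import Mathlib

section
/- Every nontrivial increasing graph property F = F_n has a threshold function; that is, there exists p₀ = p₀(n) such that P(G_{n,p} ∈ F_n) → 0 whenever p ≪ p₀ and P(G_{n,p} ∈ F_n) → 1 whenever p ≫ p₀. -/
/-!
Encode a graph on `Fin n` by the indicator `ω : ι → Bool` of its edge set, `ι` the set of
potential edges: `G_{n,p}` becomes the product Bernoulli measure `P_p` on `ι → Bool`
(`P_p(𝒜) = bernoulliProb 𝒜 p`) and an increasing property becomes an up-set `𝒜`. The union of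
independent `p`- and `s`-random sets is `(p + s - p s)`-random, and it lies in the down-set `𝒜ᶜ`
only if both sets do, so `P_{p+s-ps}(𝒜ᶜ) ≤ P_p(𝒜ᶜ) P_s(𝒜ᶜ)`; iterating, `P_q(𝒜ᶜ) ≤ P_p(𝒜ᶜ)^m`
whenever `m p ≤ q`. Let `p₀` be a point with `P_{p₀}(𝒜) = 1/2`. If `m p ≤ p₀` then
`1/2 ≤ P_p(𝒜ᶜ)^m`, and if `m p₀ ≤ p` then `P_p(𝒜ᶜ) ≤ 2^{-m}`; as `m` is arbitrary,
`P_p(𝒜) → 0` when `p ≪ p₀` and `P_p(𝒜) → 1` when `p ≫ p₀`.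
-/

open Classical in
/-- Probability that the Erdős–Rényi random graph `G_{n,p}` (on vertex set `Fin n`,
each potential edge present independently with probability `p`) satisfies `P`. -/
noncomputable def erProb (n : ℕ) (p : ℝ) (P : SimpleGraph (Fin n) → Prop) : ℝ :=
  ∑ G : SimpleGraph (Fin n),
    if P G then p ^ (Nat.card G.edgeSet) * (1 - p) ^ (n.choose 2 - Nat.card G.edgeSet) else 0

open Finset Filter Topology

section BernoulliProduct

variable {ι : Type*} [Fintype ι]

noncomputable def bernoulliWeight (p : ℝ) (ω : ι → Bool) : ℝ :=
  ∏ i, if ω i then p else 1 - p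

noncomputable def bernoulliProb (𝒜 : Finset (ι → Bool)) (p : ℝ) : ℝ :=
  ∑ ω ∈ 𝒜, bernoulliWeight p ω

lemma bernoulliWeight_nonneg {p : ℝ} (hp0 : 0 ≤ p) (hp1 : p ≤ 1) (ω : ι → Bool) :
    0 ≤ bernoulliWeight p ω :=
  prod_nonneg fun i _ => by split <;> linarith

lemma bernoulliProb_nonneg (𝒜 : Finset (ι → Bool)) {p : ℝ} (hp0 : 0 ≤ p) (hp1 : p ≤ 1) :
    0 ≤ bernoulliProb 𝒜 p :=
  sum_nonneg fun ω _ => bernoulliWeight_nonneg hp0 hp1 ω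

lemma bernoulliProb_zero (𝒜 : Finset (ι → Bool)) :
    bernoulliProb 𝒜 0 = if ⊥ ∈ 𝒜 then 1 else 0 := by
  have hweight : ∀ ω : ι → Bool, bernoulliWeight 0 ω = if ω = ⊥ then 1 else 0 := by
    intro ω
    simp only [bernoulliWeight, sub_zero, funext_iff, Pi.bot_apply, bot_eq_false,
      ← Fintype.prod_boole]
    exact Fintype.prod_congr _ _ fun i => by cases ω i <;> rfl
  simp [bernoulliProb, hweight]

lemma bernoulliProb_one (𝒜 : Finset (ι → Bool)) :
    bernoulliProb 𝒜 1 = if ⊤ ∈ 𝒜 then 1 else 0 := by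
  have hweight : ∀ ω : ι → Bool, bernoulliWeight 1 ω = if ω = ⊤ then 1 else 0 := by
    intro ω
    simp [bernoulliWeight, funext_iff, Fintype.prod_boole]
  simp [bernoulliProb, hweight]

lemma continuous_bernoulliProb (𝒜 : Finset (ι → Bool)) : Continuous (bernoulliProb 𝒜) := by
  refine continuous_finsetSum _ fun ω _ => continuous_finsetProd _ fun i _ => ?_
  split <;> fun_prop

open Classical in
noncomputable def criticalProb (𝒜 : Finset (ι → Bool)) : ℝ :=
  if h : ∃ x ∈ Set.Ioc (0 : ℝ) 1, bernoulliProb 𝒜 x = 1 / 2 then h.choose else 1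

lemma criticalProb_mem_Ioc (𝒜 : Finset (ι → Bool)) : criticalProb 𝒜 ∈ Set.Ioc (0 : ℝ) 1 := by
  unfold criticalProb
  split_ifs with h
  exacts [h.choose_spec.1, ⟨one_pos, le_rfl⟩]

lemma bernoulliProb_criticalProb {𝒜 : Finset (ι → Bool)} (hbot : ⊥ ∉ 𝒜) (htop : ⊤ ∈ 𝒜) :
    bernoulliProb 𝒜 (criticalProb 𝒜) = 1 / 2 := by
  obtain ⟨x, hx, hx_half⟩ := intermediate_value_Icc zero_le_one
    (continuous_bernoulliProb 𝒜).continuousOn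
    (by norm_num [bernoulliProb_zero, bernoulliProb_one, hbot, htop] :
      (1 / 2 : ℝ) ∈ Set.Icc (bernoulliProb 𝒜 0) (bernoulliProb 𝒜 1))
  have hx0 : x ≠ 0 := by
    rintro rfl
    norm_num [bernoulliProb_zero, hbot] at hx_half
  have h : ∃ x ∈ Set.Ioc (0 : ℝ) 1, bernoulliProb 𝒜 x = 1 / 2 :=
    ⟨x, ⟨hx.1.lt_of_ne' hx0, hx.2⟩, hx_half⟩
  rw [criticalProb, dif_pos h]
  exact h.choose_spec.2

variable [DecidableEq ι]

lemma sum_bernoulliWeight (p : ℝ) : ∑ ω : ι → Bool, bernoulliWeight p ω = 1 := by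
  simp only [bernoulliWeight, ← Fintype.prod_sum (fun _ (b : Bool) => if b then p else 1 - p),
    Fintype.sum_bool, if_true, Bool.false_eq_true, if_false, add_sub_cancel, prod_const_one]

lemma bernoulliProb_compl (𝒜 : Finset (ι → Bool)) (p : ℝ) :
    bernoulliProb 𝒜ᶜ p = 1 - bernoulliProb 𝒜 p := by
  rw [eq_sub_iff_add_eq, bernoulliProb, bernoulliProb, sum_compl_add_sum, sum_bernoulliWeight]

lemma bernoulliProb_le_one (𝒜 : Finset (ι → Bool)) {p : ℝ} (hp0 : 0 ≤ p) (hp1 : p ≤ 1) :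
    bernoulliProb 𝒜 p ≤ 1 := by
  linarith [bernoulliProb_compl 𝒜 p, bernoulliProb_nonneg 𝒜ᶜ hp0 hp1]

lemma sum_sum_sup_eq_bernoulliWeight (p s : ℝ) (χ : ι → Bool) :
    ∑ ω, ∑ τ, (if ω ⊔ τ = χ then bernoulliWeight p ω * bernoulliWeight s τ else 0) =
      bernoulliWeight (p + s - p * s) χ := by
  have hcoord : ∀ c : Bool, ∑ ab : Bool × Bool,
      (if (ab.1 || ab.2) = c then
        (if ab.1 then p else 1 - p) * (if ab.2 then s else 1 - s) else 0) =
        if c then p + s - p * s else 1 - (p + s - p * s) := by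
    intro c
    simp only [Fintype.sum_prod_type, Fintype.sum_bool, Bool.or_true, Bool.or_false]
    cases c <;> simp only [↓reduceIte, Bool.true_eq_false, Bool.false_eq_true] <;> ring
  rw [← Fintype.sum_prod_type', ← (Equiv.arrowProdEquivProdArrow ι _ _).sum_comp,
    bernoulliWeight, ← Finset.prod_congr rfl fun i _ => hcoord (χ i), Fintype.prod_sum]
  refine Fintype.sum_congr _ _ fun η => ?_
  simp only [Fintype.prod_ite_zero, bernoulliWeight, ← prod_mul_distrib, funext_iff, Pi.sup_apply]
  rfl

lemma sum_mul_bernoulliWeight_eq_sum_sum_sup (φ : (ι → Bool) → ℝ) (p s : ℝ) :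
    ∑ χ, φ χ * bernoulliWeight (p + s - p * s) χ =
      ∑ ω, ∑ τ, φ (ω ⊔ τ) * (bernoulliWeight p ω * bernoulliWeight s τ) := by
  simp_rw [← sum_sum_sup_eq_bernoulliWeight, mul_sum]
  rw [sum_comm]
  refine sum_congr rfl fun ω _ => ?_
  rw [sum_comm]
  simp [mul_ite]

lemma IsLowerSet.bernoulliProb_le_mul {𝒟 : Finset (ι → Bool)}
    (h𝒟 : IsLowerSet (𝒟 : Set (ι → Bool))) {p s : ℝ} (hp0 : 0 ≤ p) (hp1 : p ≤ 1) (hs0 : 0 ≤ s)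
    (hs1 : s ≤ 1) :
    bernoulliProb 𝒟 (p + s - p * s) ≤ bernoulliProb 𝒟 p * bernoulliProb 𝒟 s := by
  have hsum : ∀ r, bernoulliProb 𝒟 r = ∑ ω, (if ω ∈ 𝒟 then 1 else 0) * bernoulliWeight r ω := by
    simp [bernoulliProb, sum_ite_mem]
  have hsup : ∀ ω τ : ι → Bool, (if ω ⊔ τ ∈ 𝒟 then (1 : ℝ) else 0) ≤
      (if ω ∈ 𝒟 then 1 else 0) * (if τ ∈ 𝒟 then 1 else 0) := by
    intro ω τ
    by_cases h : ω ⊔ τ ∈ 𝒟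
    · have hω : ω ∈ 𝒟 := h𝒟 le_sup_left h
      have hτ : τ ∈ 𝒟 := h𝒟 le_sup_right h
      simp [h, hω, hτ]
    · simp only [h, if_false]; positivity
  calc bernoulliProb 𝒟 (p + s - p * s)
      = ∑ ω, ∑ τ, (if ω ⊔ τ ∈ 𝒟 then 1 else 0) * (bernoulliWeight p ω * bernoulliWeight s τ) := by
        rw [hsum, sum_mul_bernoulliWeight_eq_sum_sum_sup]
    _ ≤ ∑ ω, ∑ τ, ((if ω ∈ 𝒟 then 1 else 0) * (if τ ∈ 𝒟 then 1 else 0)) *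
          (bernoulliWeight p ω * bernoulliWeight s τ) := by
        gcongr with ω _ τ _
        · exact mul_nonneg (bernoulliWeight_nonneg hp0 hp1 ω) (bernoulliWeight_nonneg hs0 hs1 τ)
        · exact hsup ω τ
    _ = bernoulliProb 𝒟 p * bernoulliProb 𝒟 s := by
        rw [hsum, hsum, sum_mul_sum]
        simp only [mul_mul_mul_comm]

lemma IsLowerSet.bernoulliProb_antitoneOn {𝒟 : Finset (ι → Bool)}
    (h𝒟 : IsLowerSet (𝒟 : Set (ι → Bool))) : AntitoneOn (bernoulliProb 𝒟) (Set.Icc 0 1) := by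
  rintro p ⟨hp0, -⟩ q ⟨-, hq1⟩ hpq
  obtain rfl | hp1 := (hpq.trans hq1).eq_or_lt
  · rw [le_antisymm hq1 hpq]
  set s := (q - p) / (1 - p)
  have hs0 : 0 ≤ s := div_nonneg (by linarith) (by linarith)
  have hs1 : s ≤ 1 := (div_le_one (by linarith)).2 (by linarith)
  have hq : q = p + s - p * s := by
    simp only [s]; field_simp; ring
  rw [hq]
  calc bernoulliProb 𝒟 (p + s - p * s) ≤ bernoulliProb 𝒟 p * bernoulliProb 𝒟 s :=
        h𝒟.bernoulliProb_le_mul hp0 hp1.le hs0 hs1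
    _ ≤ bernoulliProb 𝒟 p := mul_le_of_le_one_right (bernoulliProb_nonneg 𝒟 hp0 hp1.le)
        (bernoulliProb_le_one 𝒟 hs0 hs1)

lemma IsLowerSet.bernoulliProb_one_sub_pow_le {𝒟 : Finset (ι → Bool)}
    (h𝒟 : IsLowerSet (𝒟 : Set (ι → Bool))) {p : ℝ} (hp0 : 0 ≤ p) (hp1 : p ≤ 1) (m : ℕ) :
    bernoulliProb 𝒟 (1 - (1 - p) ^ m) ≤ bernoulliProb 𝒟 p ^ m := by
  induction m with
  | zero => simpa using bernoulliProb_le_one 𝒟 le_rfl zero_le_one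
  | succ m ih =>
    have hpow0 : 0 ≤ (1 - p) ^ m := pow_nonneg (by linarith) m
    have hpow1 : (1 - p) ^ m ≤ 1 := pow_le_one₀ (by linarith) (by linarith)
    calc bernoulliProb 𝒟 (1 - (1 - p) ^ (m + 1))
        = bernoulliProb 𝒟 (p + (1 - (1 - p) ^ m) - p * (1 - (1 - p) ^ m)) := by ring_nf
      _ ≤ bernoulliProb 𝒟 p * bernoulliProb 𝒟 (1 - (1 - p) ^ m) :=
          h𝒟.bernoulliProb_le_mul hp0 hp1 (by linarith) (by linarith)
      _ ≤ bernoulliProb 𝒟 p * bernoulliProb 𝒟 p ^ m :=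
          mul_le_mul_of_nonneg_left ih (bernoulliProb_nonneg 𝒟 hp0 hp1)
      _ = bernoulliProb 𝒟 p ^ (m + 1) := (pow_succ' _ _).symm

lemma IsLowerSet.bernoulliProb_le_pow_of_mul_le {𝒟 : Finset (ι → Bool)}
    (h𝒟 : IsLowerSet (𝒟 : Set (ι → Bool))) {p q : ℝ} {m : ℕ} (hp0 : 0 ≤ p) (hp1 : p ≤ 1)
    (hmq : m * p ≤ q) (hq1 : q ≤ 1) :
    bernoulliProb 𝒟 q ≤ bernoulliProb 𝒟 p ^ m := by
  have hbernoulli := one_add_mul_sub_le_pow (a := 1 - p) (by linarith) m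
  have hpow0 : 0 ≤ (1 - p) ^ m := pow_nonneg (by linarith) m
  have hpow1 : (1 - p) ^ m ≤ 1 := pow_le_one₀ (by linarith) (by linarith)
  calc bernoulliProb 𝒟 q ≤ bernoulliProb 𝒟 (1 - (1 - p) ^ m) :=
        h𝒟.bernoulliProb_antitoneOn ⟨by linarith, by linarith⟩ ⟨by linarith, hq1⟩ (by linarith)
    _ ≤ bernoulliProb 𝒟 p ^ m := h𝒟.bernoulliProb_one_sub_pow_le hp0 hp1 m

lemma bernoulliWeight_eq_pow_mul_pow (p : ℝ) (ω : ι → Bool) :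
    bernoulliWeight p ω =
      p ^ #{i | ω i} * (1 - p) ^ (Fintype.card ι - #{i | ω i}) := by
  rw [bernoulliWeight, prod_ite, prod_const, prod_const, ← card_compl, compl_filter]

end BernoulliProduct

section Asymptotics

variable {α : Type*} {l : Filter α}

lemma tendsto_one_of_forall_eventually_le_pow {g : α → ℝ} {c : ℝ} (hc : 0 < c)
    (hg0 : ∀ n, 0 ≤ g n) (hg1 : ∀ n, g n ≤ 1) (h : ∀ m : ℕ, ∀ᶠ n in l, c ≤ g n ^ m) :
    Tendsto g l (𝓝 1) := by
  refine tendsto_order.2 ⟨fun a ha => ?_, fun a ha => .of_forall fun n => (hg1 n).trans_lt ha⟩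
  obtain ⟨m, hm⟩ := exists_pow_lt_of_lt_one hc (max_lt ha one_pos)
  filter_upwards [h m] with n hn
  by_contra! hle
  have := pow_le_pow_left₀ (hg0 n) (hle.trans (le_max_left a 0)) m
  linarith

lemma tendsto_zero_of_forall_eventually_le_pow {g : α → ℝ} {c : ℝ} (hc : c < 1)
    (hg0 : ∀ n, 0 ≤ g n) (h : ∀ m : ℕ, ∀ᶠ n in l, g n ≤ c ^ m) :
    Tendsto g l (𝓝 0) := by
  refine tendsto_order.2 ⟨fun a ha => .of_forall fun n => ha.trans_le (hg0 n), fun a ha => ?_⟩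
  obtain ⟨m, hm⟩ := exists_pow_lt_of_lt_one ha hc
  exact (h m).mono fun n hn => hn.trans_lt hm

lemma eventually_natCast_mul_le_of_tendsto_div_zero {p q : α → ℝ} (hq : ∀ n, 0 < q n)
    (h : Tendsto (fun n => p n / q n) l (𝓝 0)) (m : ℕ) : ∀ᶠ n in l, m * p n ≤ q n := by
  filter_upwards [(tendsto_order.1 h).2 (1 / (m + 1)) (by positivity)] with n hn
  rw [div_lt_div_iff₀ (hq n) (by positivity), one_mul] at hn
  rcases le_or_gt 0 (p n) with hp | hp
  · linarith
  · linarith [mul_nonpos_of_nonneg_of_nonpos (Nat.cast_nonneg (α := ℝ) m) hp.le, hq n]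

lemma eventually_natCast_mul_le_of_tendsto_div_atTop {p q : α → ℝ} (hq : ∀ n, 0 < q n)
    (h : Tendsto (fun n => p n / q n) l atTop) (m : ℕ) : ∀ᶠ n in l, m * q n ≤ p n :=
  (h.eventually_ge_atTop m).mono fun n hn => (le_div_iff₀ (hq n)).1 hn

end Asymptotics

section Threshold

variable {α : Type*} {l : Filter α} {ι : α → Type*} [∀ n, Fintype (ι n)] [∀ n, DecidableEq (ι n)]
  {𝒟 : ∀ n, Finset (ι n → Bool)} {p₀ p : α → ℝ}

lemma tendsto_bernoulliProb_one_of_isLowerSet (h𝒟 : ∀ n, IsLowerSet (𝒟 n : Set (ι n → Bool)))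
    (hp₀ : ∀ n, p₀ n ∈ Set.Ioc 0 1) (hhalf : ∀ᶠ n in l, bernoulliProb (𝒟 n) (p₀ n) = 1 / 2)
    (hp : ∀ n, 0 ≤ p n ∧ p n ≤ 1) (hsmall : Tendsto (fun n => p n / p₀ n) l (𝓝 0)) :
    Tendsto (fun n => bernoulliProb (𝒟 n) (p n)) l (𝓝 1) := by
  refine tendsto_one_of_forall_eventually_le_pow (c := 1 / 2) (by norm_num)
    (fun n => bernoulliProb_nonneg _ (hp n).1 (hp n).2)
    (fun n => bernoulliProb_le_one _ (hp n).1 (hp n).2) fun m => ?_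
  filter_upwards [hhalf, eventually_natCast_mul_le_of_tendsto_div_zero (fun n => (hp₀ n).1)
    hsmall m] with n hhalf hm
  rw [← hhalf]
  exact (h𝒟 n).bernoulliProb_le_pow_of_mul_le (hp n).1 (hp n).2 hm (hp₀ n).2

lemma tendsto_bernoulliProb_zero_of_isLowerSet (h𝒟 : ∀ n, IsLowerSet (𝒟 n : Set (ι n → Bool)))
    (hp₀ : ∀ n, p₀ n ∈ Set.Ioc 0 1) (hhalf : ∀ᶠ n in l, bernoulliProb (𝒟 n) (p₀ n) = 1 / 2)
    (hp : ∀ n, 0 ≤ p n ∧ p n ≤ 1) (hlarge : Tendsto (fun n => p n / p₀ n) l atTop) :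
    Tendsto (fun n => bernoulliProb (𝒟 n) (p n)) l (𝓝 0) := by
  refine tendsto_zero_of_forall_eventually_le_pow (c := 1 / 2) (by norm_num)
    (fun n => bernoulliProb_nonneg _ (hp n).1 (hp n).2) fun m => ?_
  filter_upwards [hhalf, eventually_natCast_mul_le_of_tendsto_div_atTop (fun n => (hp₀ n).1)
    hlarge m] with n hhalf hm
  rw [← hhalf]
  exact (h𝒟 n).bernoulliProb_le_pow_of_mul_le (hp₀ n).1.le (hp₀ n).2 hm (hp n).2

end Threshold

theorem exists_bernoulliProb_threshold {α : Type*} {l : Filter α} {ι : α → Type*}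
    [∀ n, Fintype (ι n)] [∀ n, DecidableEq (ι n)] (𝒜 : ∀ n, Finset (ι n → Bool))
    (h𝒜 : ∀ n, IsUpperSet (𝒜 n : Set (ι n → Bool)))
    (hbot : ∀ᶠ n in l, ⊥ ∉ 𝒜 n) (htop : ∀ᶠ n in l, ⊤ ∈ 𝒜 n) :
    ∃ p₀ : α → ℝ, (∀ n, 0 < p₀ n) ∧ ∀ p : α → ℝ, (∀ n, 0 ≤ p n ∧ p n ≤ 1) →
      (Tendsto (fun n => p n / p₀ n) l (𝓝 0) →
        Tendsto (fun n => bernoulliProb (𝒜 n) (p n)) l (𝓝 0)) ∧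
      (Tendsto (fun n => p n / p₀ n) l atTop →
        Tendsto (fun n => bernoulliProb (𝒜 n) (p n)) l (𝓝 1)) := by
  have hp₀ n : criticalProb (𝒜 n) ∈ Set.Ioc 0 1 := criticalProb_mem_Ioc (𝒜 n)
  have hlower n : IsLowerSet (((𝒜 n)ᶜ : Finset (ι n → Bool)) : Set (ι n → Bool)) := by
    rw [coe_compl]
    exact (h𝒜 n).compl
  have hhalf : ∀ᶠ n in l, bernoulliProb (𝒜 n)ᶜ (criticalProb (𝒜 n)) = 1 / 2 := by
    filter_upwards [hbot, htop] with n hbot htop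
    rw [bernoulliProb_compl, bernoulliProb_criticalProb hbot htop]
    norm_num
  refine ⟨fun n => criticalProb (𝒜 n), fun n => (hp₀ n).1, fun p hp => ⟨fun hsmall => ?_,
    fun hlarge => ?_⟩⟩
  · simpa [bernoulliProb_compl] using
      (tendsto_bernoulliProb_one_of_isLowerSet hlower hp₀ hhalf hp hsmall).const_sub 1
  · simpa [bernoulliProb_compl] using
      (tendsto_bernoulliProb_zero_of_isLowerSet hlower hp₀ hhalf hp hlarge).const_sub 1

namespace SimpleGraph

variable (V : Type*)

open Classical in
noncomputable def edgeIndicatorIso : SimpleGraph V ≃o ({e : Sym2 V // ¬e.IsDiag} → Bool) where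
  toFun G e := decide (e.1 ∈ G.edgeSet)
  invFun ω := fromEdgeSet {e | ∃ h : ¬e.IsDiag, ω ⟨e, h⟩}
  left_inv G := by
    refine edgeSet_inj.1 (Set.ext fun e => ?_)
    simp only [edgeSet_fromEdgeSet, Set.mem_sdiff, Set.mem_ofPred_eq, decide_eq_true_eq,
      Sym2.mem_diagSet]
    exact ⟨fun h => h.1.2, fun h =>
      ⟨⟨G.not_isDiag_of_mem_edgeSet h, h⟩, G.not_isDiag_of_mem_edgeSet h⟩⟩
  right_inv ω := by
    funext ⟨e, he⟩
    simp [edgeSet_fromEdgeSet, he]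
  map_rel_iff' {G H} := by
    simp only [Equiv.coe_fn_mk, Pi.le_def, Bool.le_iff_imp, decide_eq_true_eq, Subtype.forall,
      ← edgeSet_subset_edgeSet, Set.subset_def]
    exact ⟨fun h e he => h e (G.not_isDiag_of_mem_edgeSet he) he, fun h e _ => h e⟩

lemma card_filter_edgeIndicatorIso [Fintype V] [DecidableEq V] (G : SimpleGraph V) :
    #{e | edgeIndicatorIso V G e} = Nat.card G.edgeSet := by
  classical
  rw [← Nat.card_congr (Equiv.subtypeSubtypeEquivSubtype G.not_isDiag_of_mem_edgeSet),
    Nat.card_eq_fintype_card, Fintype.card_subtype]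
  simp [edgeIndicatorIso]

end SimpleGraph

open Classical in
lemma erProb_eq_bernoulliProb (n : ℕ) (p : ℝ) (F : Set (SimpleGraph (Fin n))) :
    erProb n p (· ∈ F) =
      bernoulliProb {ω | (SimpleGraph.edgeIndicatorIso (Fin n)).symm ω ∈ F} p := by
  rw [erProb, bernoulliProb, sum_filter]
  refine Fintype.sum_equiv (SimpleGraph.edgeIndicatorIso (Fin n)).toEquiv _ _ fun G => ?_
  rw [OrderIso.coe_toEquiv, OrderIso.symm_apply_apply, bernoulliWeight_eq_pow_mul_pow,
    SimpleGraph.card_filter_edgeIndicatorIso, Sym2.card_subtype_not_diag, Fintype.card_fin]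

theorem bollobas_thomason_threshold_general (F : ∀ n : ℕ, Set (SimpleGraph (Fin n)))
    (hinc : ∀ (n : ℕ) (G H : SimpleGraph (Fin n)), G ≤ H → G ∈ F n → H ∈ F n)
    (hnonempty : ∀ᶠ n in Filter.atTop, (F n).Nonempty)
    (hnonfull : ∀ᶠ n in Filter.atTop, F n ≠ Set.univ) :
    ∃ p₀ : ℕ → ℝ, (∀ n, 0 < p₀ n) ∧
      ∀ p : ℕ → ℝ, (∀ n, 0 ≤ p n ∧ p n ≤ 1) →
        (Filter.Tendsto (fun n => p n / p₀ n) Filter.atTop (nhds 0) →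
          Filter.Tendsto (fun n => erProb n (p n) (fun G => G ∈ F n)) Filter.atTop (nhds 0)) ∧
        (Filter.Tendsto (fun n => p n / p₀ n) Filter.atTop Filter.atTop →
          Filter.Tendsto (fun n => erProb n (p n) (fun G => G ∈ F n)) Filter.atTop (nhds 1)) := by
  classical
  let e n := SimpleGraph.edgeIndicatorIso (Fin n)
  have hF n : IsUpperSet (F n) := fun _ _ => hinc n _ _
  obtain ⟨p₀, hp₀, hthreshold⟩ := exists_bernoulliProb_threshold
    (fun n => ({ω | (e n).symm ω ∈ F n} : Finset _))
    (fun n _ _ hωτ hω => by simpa using hF n ((e n).symm.monotone hωτ) (by simpa using hω))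
    (by filter_upwards [hnonfull] with n hn; simpa [(hF n).bot_mem] using hn)
    (by filter_upwards [hnonempty] with n hn; simpa [(hF n).top_mem] using hn)
  refine ⟨p₀, hp₀, fun p hp => ?_⟩
  simp only [erProb_eq_bernoulliProb]
  exact hthreshold p hp

/-- **Bollobás–Thomason**: every nontrivial increasing graph property has a threshold
function `p₀`: `P(G_{n,p} ∈ F_n) → 0` whenever `p ≪ p₀` and `P(G_{n,p} ∈ F_n) → 1`
whenever `p ≫ p₀`. -/
theorem bollobas_thomason_threshold (F : ∀ n : ℕ, Set (SimpleGraph (Fin n)))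
    (hiso : ∀ (n : ℕ) (G H : SimpleGraph (Fin n)), Nonempty (G ≃g H) → (G ∈ F n ↔ H ∈ F n))
    (hinc : ∀ (n : ℕ) (G H : SimpleGraph (Fin n)), G ≤ H → G ∈ F n → H ∈ F n)
    (hnonempty : ∀ᶠ n in Filter.atTop, (F n).Nonempty)
    (hnonfull : ∀ᶠ n in Filter.atTop, F n ≠ Set.univ) :
    ∃ p₀ : ℕ → ℝ, (∀ n, 0 < p₀ n) ∧
      ∀ p : ℕ → ℝ, (∀ n, 0 ≤ p n ∧ p n ≤ 1) →
        (Filter.Tendsto (fun n => p n / p₀ n) Filter.atTop (nhds 0) →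
          Filter.Tendsto (fun n => erProb n (p n) (fun G => G ∈ F n)) Filter.atTop (nhds 0)) ∧
        (Filter.Tendsto (fun n => p n / p₀ n) Filter.atTop Filter.atTop →
          Filter.Tendsto (fun n => erProb n (p n) (fun G => G ∈ F n)) Filter.atTop (nhds 1)) :=
  bollobas_thomason_threshold_general F hinc hnonempty hnonfull
end

section
/- p₀(n) = (log n)/n is a threshold function for the property that G_{n,p} is connected (equivalently, contains a spanning tree): if p ≪ (log n)/n then P(G_{n,p} is connected) → 0, and if p ≫ (log n)/n then P(G_{n,p} is connected) → 1. -/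
/-!
Below the threshold we apply the second moment method to the number `X` of isolated
vertices: `E X = n (1 - p) ^ (n - 1) → ∞`, while two distinct isolated vertices `u, v` leave
no edge between `{u, v}` and the rest, so
`E X² ≤ E X + n² (1 - p) ^ (2 (n - 2)) = E X + (E X)² / (1 - p)²`.
Hence `P(X = 0) ≤ (E X² - (E X)²) / (E X)² → 0`, and a connected graph on at least two
vertices has no isolated vertex.

Above the threshold, a disconnected graph has a vertex set `A` with `1 ≤ |A| ≤ n / 2` and no
edge between `A` and its complement. This happens with probability
`(1 - p) ^ (|A| (n - |A|)) ≤ e ^ (-p n |A| / 2)`, and the union bound over all nonempty `A`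
gives `P(G not connected) ≤ (1 + e ^ (-p n / 2)) ^ n - 1 ≤ exp (n e ^ (-p n / 2)) - 1 → 0`.
-/

open Finset Filter Topology

namespace SimpleGraph

variable {V : Type*} {G : SimpleGraph V}

variable (G) in
def NoCrossingEdges (A : Finset V) : Prop := ∀ a ∈ A, ∀ b ∉ A, ¬ G.Adj a b

lemma noCrossingEdges_singleton {v : V} : G.NoCrossingEdges {v} ↔ ∀ w, ¬ G.Adj v w := by
  refine ⟨fun h w hvw => h v (mem_singleton_self v) w ?_ hvw, fun h a ha b _ => ?_⟩
  · simpa using hvw.ne'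
  · rw [mem_singleton.1 ha]; exact h b

lemma NoCrossingEdges.compl [Fintype V] [DecidableEq V] {A : Finset V}
    (h : G.NoCrossingEdges A) : G.NoCrossingEdges Aᶜ := fun a ha b hb hab =>
  h b (by simpa using hb) a (mem_compl.1 ha) hab.symm

lemma NoCrossingEdges.mem_of_reachable {A : Finset V} (h : G.NoCrossingEdges A) {a b : V}
    (ha : a ∈ A) (hab : G.Reachable a b) : b ∈ A := by
  by_contra hb
  obtain ⟨d, -, hd, hd'⟩ := hab.some.exists_boundary_dart (A : Set V) ha hb
  exact h _ hd _ hd' d.adj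

lemma Connected.eq_univ_of_noCrossingEdges [Fintype V] (hG : G.Connected) {A : Finset V}
    (h : G.NoCrossingEdges A) (hA : A.Nonempty) : A = univ := by
  obtain ⟨a, ha⟩ := hA
  exact eq_univ_of_forall fun b => h.mem_of_reachable ha (hG a b)

lemma exists_noCrossingEdges_of_not_connected [Fintype V] [DecidableEq V] [Nonempty V]
    (hG : ¬ G.Connected) :
    ∃ A : Finset V, A.Nonempty ∧ 2 * #A ≤ Fintype.card V ∧ G.NoCrossingEdges A := by
  classical
  obtain ⟨u, v, huv⟩ : ∃ u v, ¬ G.Reachable u v := by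
    simpa [connected_iff, Preconnected] using hG
  let C : Finset V := {w | G.Reachable u w}
  have hC : G.NoCrossingEdges C := fun a ha b hb hab =>
    hb ((mem_filter_univ _).2 (((mem_filter_univ _).1 ha).trans hab.reachable))
  have hcard : #C + #Cᶜ = Fintype.card V := card_add_card_compl C
  by_cases h : 2 * #C ≤ Fintype.card V
  · exact ⟨C, ⟨u, (mem_filter_univ _).2 .rfl⟩, h, hC⟩
  · exact ⟨Cᶜ, ⟨v, by simpa [C] using huv⟩, by omega, hC.compl⟩

open Classical in
noncomputable def numIsolated [Fintype V] (G : SimpleGraph V) : ℕ :=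
  #{v | ∀ w, ¬ G.Adj v w}

lemma Connected.numIsolated_eq_zero [Fintype V] (hG : G.Connected) (hV : 1 < Fintype.card V) :
    G.numIsolated = 0 := by
  classical
  rw [numIsolated, card_eq_zero, filter_eq_empty_iff]
  intro v _ hv
  have := hG.eq_univ_of_noCrossingEdges (noCrossingEdges_singleton.2 hv)
    (singleton_nonempty v)
  rw [← card_univ, ← this, card_singleton] at hV
  exact lt_irrefl 1 hV

variable [Fintype V] [DecidableEq V]

def crossingEdges (A : Finset V) : Finset (Sym2 V) := (A ×ˢ Aᶜ).image fun x => s(x.1, x.2)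

lemma crossingEdges_subset_edgeFinset_top (A : Finset V) :
    crossingEdges A ⊆ (⊤ : SimpleGraph V).edgeFinset := by
  simp only [crossingEdges, subset_iff, mem_image, mem_product, mem_compl, Prod.exists]
  rintro _ ⟨a, b, ⟨ha, hb⟩, rfl⟩
  simpa using fun hab : a = b => hb (hab ▸ ha)

lemma card_crossingEdges (A : Finset V) :
    #(crossingEdges A) = #A * (Fintype.card V - #A) := by
  rw [crossingEdges, card_image_of_injOn, card_product, card_compl]
  rintro ⟨a, b⟩ hab ⟨a', b'⟩ hab' h
  simp only [coe_product, Set.mem_prod, mem_coe, coe_compl, Set.mem_compl_iff] at hab hab'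
  rcases Sym2.eq_iff.1 h with ⟨rfl, rfl⟩ | ⟨rfl, rfl⟩
  · rfl
  · exact absurd hab.1 hab'.2

lemma noCrossingEdges_iff_disjoint (A : Finset V) :
    G.NoCrossingEdges A ↔ Disjoint G.edgeSet ↑(crossingEdges A) := by
  simp only [NoCrossingEdges, Set.disjoint_right, crossingEdges, coe_image, Set.mem_image,
    mem_coe, mem_product, mem_compl, Prod.exists, forall_exists_index, and_imp]
  constructor
  · rintro h _ a b ha hb rfl
    exact h a ha b hb
  · exact fun h a ha b hb => h a b ha hb rfl

open Classical in
lemma sum_eq_sum_powerset_edgeFinset {M : Type*} [AddCommMonoid M] (f : Finset (Sym2 V) → M) :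
    ∑ G : SimpleGraph V, f G.edgeFinset =
      ∑ s ∈ (⊤ : SimpleGraph V).edgeFinset.powerset, f s := by
  have himage : univ.image (fun G : SimpleGraph V => G.edgeFinset) =
      (⊤ : SimpleGraph V).edgeFinset.powerset := by
    ext s
    simp only [mem_image, mem_univ, true_and, mem_powerset]
    refine ⟨fun ⟨G, hG⟩ => hG ▸ edgeFinset_subset_edgeFinset.2 le_top, fun hs => ?_⟩
    refine ⟨fromEdgeSet s, ?_⟩
    rw [← coe_inj, coe_edgeFinset, edgeSet_fromEdgeSet, sdiff_eq_left,
      ← Set.subset_compl_iff_disjoint_right, ← edgeSet_top, ← coe_edgeFinset]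
    exact_mod_cast hs
  rw [← himage, sum_image fun G _ H _ h => edgeFinset_inj.1 h]

end SimpleGraph

section ErdosRenyi

variable {n : ℕ} {p : ℝ}

noncomputable def erWeight (n : ℕ) (p : ℝ) (G : SimpleGraph (Fin n)) : ℝ :=
  p ^ Nat.card G.edgeSet * (1 - p) ^ (n.choose 2 - Nat.card G.edgeSet)

noncomputable def erMean (n : ℕ) (p : ℝ) (X : SimpleGraph (Fin n) → ℝ) : ℝ :=
  ∑ G, erWeight n p G * X G

open Classical in
lemma erProb_eq_erMean (P : SimpleGraph (Fin n) → Prop) :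
    erProb n p P = erMean n p (fun G => if P G then 1 else 0) := by
  simp only [erProb, erMean, erWeight, mul_ite, mul_one, mul_zero]

lemma erWeight_nonneg (hp0 : 0 ≤ p) (hp1 : p ≤ 1) (G : SimpleGraph (Fin n)) :
    0 ≤ erWeight n p G :=
  mul_nonneg (pow_nonneg hp0 _) (pow_nonneg (sub_nonneg.2 hp1) _)

lemma erMean_mono (hp0 : 0 ≤ p) (hp1 : p ≤ 1) {X Y : SimpleGraph (Fin n) → ℝ}
    (h : ∀ G, X G ≤ Y G) : erMean n p X ≤ erMean n p Y :=
  sum_le_sum fun G _ => mul_le_mul_of_nonneg_left (h G) (erWeight_nonneg hp0 hp1 G)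

lemma erProb_mono (hp0 : 0 ≤ p) (hp1 : p ≤ 1) {P Q : SimpleGraph (Fin n) → Prop}
    (h : ∀ G, P G → Q G) : erProb n p P ≤ erProb n p Q := by
  classical
  simp only [erProb_eq_erMean]
  refine erMean_mono hp0 hp1 fun G => ?_
  by_cases hP : P G
  · simp [hP, h G hP]
  · split_ifs <;> norm_num

lemma erProb_nonneg (hp0 : 0 ≤ p) (hp1 : p ≤ 1) (P : SimpleGraph (Fin n) → Prop) :
    0 ≤ erProb n p P :=
  sum_nonneg fun G _ => by split_ifs; exacts [erWeight_nonneg hp0 hp1 G, le_rfl]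

open Classical in
lemma erProb_disjoint_edgeSet {S : Finset (Sym2 (Fin n))}
    (hS : S ⊆ (⊤ : SimpleGraph (Fin n)).edgeFinset) :
    erProb n p (fun G => Disjoint G.edgeSet ↑S) = (1 - p) ^ #S := by
  set T := (⊤ : SimpleGraph (Fin n)).edgeFinset
  have hT : #T = n.choose 2 := by
    rw [SimpleGraph.card_edgeFinset_top_eq_card_choose_two, Fintype.card_fin]
  have hST : #(T \ S) + #S = #T := card_sdiff_add_card_eq_card hS
  calc erProb n p (fun G => Disjoint G.edgeSet ↑S)
      = ∑ s ∈ T.powerset, if Disjoint s S then p ^ #s * (1 - p) ^ (#T - #s) else 0 := by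
        rw [hT, ← SimpleGraph.sum_eq_sum_powerset_edgeFinset
          (fun s => if Disjoint s S then p ^ #s * (1 - p) ^ (n.choose 2 - #s) else 0)]
        refine sum_congr rfl fun G _ => ?_
        simp only [← SimpleGraph.coe_edgeFinset, disjoint_coe, Nat.card_eq_fintype_card,
          SimpleGraph.edgeFinset_card]
    _ = ∑ s ∈ (T \ S).powerset, p ^ #s * (1 - p) ^ (#(T \ S) - #s) * (1 - p) ^ #S := by
        rw [← sum_filter]
        refine sum_congr ?_ fun s hs => ?_
        · ext s
          simp [subset_sdiff]
        · rw [mul_assoc, ← pow_add]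
          have := card_le_card (mem_powerset.1 hs)
          congr 2
          omega
    _ = (1 - p) ^ #S := by
        rw [← sum_mul, sum_pow_mul_eq_add_pow, add_sub_cancel, one_pow, one_mul]

lemma erMean_one : erMean n p (fun _ => 1) = 1 := by
  classical
  have h := erProb_disjoint_edgeSet (n := n) (p := p) (empty_subset _)
  simpa [erProb_eq_erMean] using h

lemma erProb_not (P : SimpleGraph (Fin n) → Prop) :
    erProb n p (fun G => ¬ P G) = 1 - erProb n p P := by
  classical
  rw [eq_sub_iff_add_eq, ← erMean_one (n := n) (p := p), erProb_eq_erMean, erProb_eq_erMean,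
    erMean, erMean, erMean, ← sum_add_distrib]
  refine sum_congr rfl fun G _ => ?_
  by_cases h : P G <;> simp [h]

lemma erMean_card_filter {ι : Type*} (s : Finset ι) (Q : ι → SimpleGraph (Fin n) → Prop)
    [∀ i G, Decidable (Q i G)] :
    erMean n p (fun G => #{i ∈ s | Q i G}) = ∑ i ∈ s, erProb n p (Q i) := by
  simp only [erMean, card_filter, Nat.cast_sum, Nat.cast_ite, Nat.cast_one, Nat.cast_zero,
    mul_sum]
  rw [sum_comm]
  refine sum_congr rfl fun i _ => ?_
  rw [erProb_eq_erMean, erMean]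
  congr! 3

lemma erProb_exists_le_sum (hp0 : 0 ≤ p) (hp1 : p ≤ 1) {ι : Type*} (s : Finset ι)
    (Q : ι → SimpleGraph (Fin n) → Prop) :
    erProb n p (fun G => ∃ i ∈ s, Q i G) ≤ ∑ i ∈ s, erProb n p (Q i) := by
  classical
  rw [← erMean_card_filter, erProb_eq_erMean]
  refine erMean_mono hp0 hp1 fun G => ?_
  split_ifs with h
  · obtain ⟨i, hi, hQ⟩ := h
    exact Nat.one_le_cast.2 (card_pos.2 ⟨i, mem_filter.2 ⟨hi, hQ⟩⟩)
  · positivity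

lemma erProb_noCrossingEdges (A : Finset (Fin n)) :
    erProb n p (fun G => G.NoCrossingEdges A) = (1 - p) ^ (#A * (n - #A)) := by
  classical
  simp only [SimpleGraph.noCrossingEdges_iff_disjoint]
  rw [erProb_disjoint_edgeSet (SimpleGraph.crossingEdges_subset_edgeFinset_top A),
    SimpleGraph.card_crossingEdges, Fintype.card_fin]

lemma erProb_eq_zero_le_of_moments (hp0 : 0 ≤ p) (hp1 : p ≤ 1) (X : SimpleGraph (Fin n) → ℝ)
    {μ M : ℝ} (hμ : 0 < μ) (hX : erMean n p X = μ)
    (hX2 : erMean n p (fun G => X G ^ 2) ≤ M) :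
    erProb n p (fun G => X G = 0) ≤ (M - μ ^ 2) / μ ^ 2 := by
  classical
  rw [le_div_iff₀ (by positivity), erProb_eq_erMean]
  have hexpand : erMean n p (fun G => (X G - μ) ^ 2) =
      erMean n p (fun G => X G ^ 2) - 2 * μ * erMean n p X +
        μ ^ 2 * erMean n p (fun _ => 1) := by
    simp only [erMean, mul_sum, ← sum_sub_distrib, ← sum_add_distrib]
    exact sum_congr rfl fun G _ => by ring
  have hchebyshev : erMean n p (fun G => if X G = 0 then 1 else 0) * μ ^ 2 ≤
      erMean n p (fun G => (X G - μ) ^ 2) := by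
    simp only [erMean, sum_mul]
    refine sum_le_sum fun G _ => ?_
    rw [mul_assoc]
    refine mul_le_mul_of_nonneg_left ?_ (erWeight_nonneg hp0 hp1 G)
    split_ifs with h
    · simp [h]
    · simp [sq_nonneg]
  rw [hexpand, hX, erMean_one] at hchebyshev
  linarith

lemma erMean_numIsolated :
    erMean n p (fun G => G.numIsolated) = n * (1 - p) ^ (n - 1) := by
  classical
  simp only [SimpleGraph.numIsolated, ← SimpleGraph.noCrossingEdges_singleton,
    erMean_card_filter, erProb_noCrossingEdges, card_singleton, one_mul, sum_const, card_univ,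
    Fintype.card_fin,
    nsmul_eq_mul]

lemma erMean_numIsolated_sq_le (hp0 : 0 ≤ p) (hp1 : p ≤ 1) :
    erMean n p (fun G => (G.numIsolated : ℝ) ^ 2) ≤
      n * (1 - p) ^ (n - 1) + n ^ 2 * (1 - p) ^ (2 * (n - 2)) := by
  classical
  have hsq : ∀ G : SimpleGraph (Fin n), (G.numIsolated : ℝ) ^ 2 =
      #{x ∈ univ ×ˢ univ | (∀ w, ¬ G.Adj x.1 w) ∧ ∀ w, ¬ G.Adj x.2 w} := by
    intro G
    rw [SimpleGraph.numIsolated, sq, ← Nat.cast_mul, ← card_product]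
    congr 2
    ext x
    simp
  have hpair : ∀ u v : Fin n,
      erProb n p (fun G => (∀ w, ¬ G.Adj u w) ∧ ∀ w, ¬ G.Adj v w) ≤
        (if u = v then (1 - p) ^ (n - 1) else 0) + (1 - p) ^ (2 * (n - 2)) := by
    intro u v
    split_ifs with huv
    · subst huv
      simp only [and_self, ← SimpleGraph.noCrossingEdges_singleton, erProb_noCrossingEdges,
        card_singleton, one_mul, le_add_iff_nonneg_right]
      exact pow_nonneg (sub_nonneg.2 hp1) _
    · refine (erProb_mono hp0 hp1 (Q := fun G => G.NoCrossingEdges {u, v}) ?_).trans ?_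
      · rintro G ⟨hu, hv⟩ a ha b _
        rcases mem_insert.1 ha with rfl | ha
        · exact hu b
        · exact mem_singleton.1 ha ▸ hv b
      · rw [erProb_noCrossingEdges, card_pair huv, zero_add]
  simp only [hsq, erMean_card_filter]
  calc ∑ x ∈ univ ×ˢ univ,
        erProb n p (fun G => (∀ w, ¬ G.Adj x.1 w) ∧ ∀ w, ¬ G.Adj x.2 w)
      ≤ ∑ x ∈ (univ : Finset (Fin n)) ×ˢ univ,
          ((if x.1 = x.2 then (1 - p) ^ (n - 1) else 0) + (1 - p) ^ (2 * (n - 2))) :=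
        sum_le_sum fun x _ => hpair x.1 x.2
    _ = n * (1 - p) ^ (n - 1) + n ^ 2 * (1 - p) ^ (2 * (n - 2)) := by
        rw [sum_add_distrib, univ_product_univ, Fintype.sum_prod_type]
        simp [sq]

lemma erProb_connected_le (hn : 2 ≤ n) (hp0 : 0 ≤ p) (hp1 : p < 1) :
    erProb n p (fun G => G.Connected) ≤
      (n * (1 - p) ^ (n - 1))⁻¹ + ((1 - p) ^ 2)⁻¹ - 1 := by
  have hc : 0 < 1 - p := sub_pos.2 hp1
  have hμ : 0 < (n : ℝ) * (1 - p) ^ (n - 1) := by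
    have : (0 : ℝ) < n := by exact_mod_cast (by omega : 0 < n)
    positivity
  calc erProb n p (fun G => G.Connected)
      ≤ erProb n p (fun G => (G.numIsolated : ℝ) = 0) := by
        refine erProb_mono hp0 hp1.le fun G hG => ?_
        rw [hG.numIsolated_eq_zero (by rw [Fintype.card_fin]; omega), Nat.cast_zero]
    _ ≤ (n * (1 - p) ^ (n - 1) + n ^ 2 * (1 - p) ^ (2 * (n - 2)) -
          (n * (1 - p) ^ (n - 1)) ^ 2) / (n * (1 - p) ^ (n - 1)) ^ 2 :=
        erProb_eq_zero_le_of_moments hp0 hp1.le _ hμ erMean_numIsolated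
          (erMean_numIsolated_sq_le hp0 hp1.le)
    _ = (n * (1 - p) ^ (n - 1))⁻¹ + ((1 - p) ^ 2)⁻¹ - 1 := by
        obtain ⟨k, rfl⟩ : ∃ k, n = k + 2 := ⟨n - 2, by omega⟩
        simp only [Nat.add_sub_cancel, show k + 2 - 1 = k + 1 by omega] at hμ ⊢
        field_simp
        ring

lemma one_sub_pow_mul_sub_le (hp0 : 0 ≤ p) (hp1 : p ≤ 1) {k : ℕ} (hk : 2 * k ≤ n) :
    (1 - p) ^ (k * (n - k)) ≤ Real.exp (-(p * n) / 2) ^ k := by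
  have hkn : (n : ℝ) / 2 ≤ ((n - k : ℕ) : ℝ) := by
    rw [Nat.cast_sub (by omega)]
    linarith [show (2 * k : ℝ) ≤ n by exact_mod_cast hk]
  calc (1 - p) ^ (k * (n - k))
      ≤ Real.exp (-p) ^ (k * (n - k)) :=
        pow_le_pow_left₀ (sub_nonneg.2 hp1) (Real.one_sub_le_exp_neg p) _
    _ = Real.exp (-(p * (n - k : ℕ))) ^ k := by
        rw [pow_mul', ← Real.exp_nat_mul, mul_neg, mul_comm]
    _ ≤ Real.exp (-(p * n) / 2) ^ k := by
        gcongr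
        nlinarith

lemma sum_pow_card_erase_empty (α : Type*) [Fintype α] [DecidableEq α] (r : ℝ) :
    ∑ A ∈ univ.erase (∅ : Finset α), r ^ #A = (1 + r) ^ Fintype.card α - 1 := by
  rw [sum_erase_eq_sub (mem_univ _), card_empty, pow_zero, add_comm 1 r,
    ← Fintype.sum_pow_mul_eq_add_pow]
  simp

lemma erProb_not_connected_le (hn : 0 < n) (hp0 : 0 ≤ p) (hp1 : p ≤ 1) :
    erProb n p (fun G => ¬ G.Connected) ≤ Real.exp (n * Real.exp (-(p * n) / 2)) - 1 := by
  have : Nonempty (Fin n) := ⟨⟨0, hn⟩⟩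
  set r := Real.exp (-(p * n) / 2)
  let 𝒜 : Finset (Finset (Fin n)) := {A | A.Nonempty ∧ 2 * #A ≤ n}
  calc erProb n p (fun G => ¬ G.Connected)
      ≤ erProb n p (fun G => ∃ A ∈ 𝒜, G.NoCrossingEdges A) := by
        refine erProb_mono hp0 hp1 fun G hG => ?_
        obtain ⟨A, hA, hAn, hGA⟩ := SimpleGraph.exists_noCrossingEdges_of_not_connected hG
        exact ⟨A, (mem_filter_univ _).2 ⟨hA, by simpa using hAn⟩, hGA⟩
    _ ≤ ∑ A ∈ 𝒜, erProb n p (fun G => G.NoCrossingEdges A) :=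
        erProb_exists_le_sum hp0 hp1 _ _
    _ ≤ ∑ A ∈ 𝒜, r ^ #A := by
        refine sum_le_sum fun A hA => ?_
        rw [erProb_noCrossingEdges]
        exact one_sub_pow_mul_sub_le hp0 hp1 ((mem_filter_univ _).1 hA).2
    _ ≤ ∑ A ∈ univ.erase ∅, r ^ #A := by
        refine sum_le_sum_of_subset_of_nonneg (fun A hA => ?_) fun _ _ _ => by positivity
        exact mem_erase.2 ⟨((mem_filter_univ _).1 hA).1.ne_empty, mem_univ A⟩
    _ = (1 + r) ^ n - 1 := by rw [sum_pow_card_erase_empty, Fintype.card_fin]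
    _ ≤ Real.exp (n * r) - 1 := by
        rw [Real.exp_nat_mul]
        gcongr
        linarith [Real.add_one_le_exp r]

end ErdosRenyi

lemma exp_neg_mul_div_one_sub_le_one_sub_pow {p : ℝ} (hp1 : p < 1) (n : ℕ) :
    Real.exp (-(n * p / (1 - p))) ≤ (1 - p) ^ n := by
  have hc : 0 < 1 - p := sub_pos.2 hp1
  have hlog : -(p / (1 - p)) ≤ Real.log (1 - p) := by
    convert Real.one_sub_inv_le_log_of_pos hc using 1
    field_simp
    ring
  calc Real.exp (-(n * p / (1 - p))) = Real.exp (n * -(p / (1 - p))) := by ring_nf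
    _ ≤ Real.exp (n * Real.log (1 - p)) := by gcongr
    _ = (1 - p) ^ n := by rw [Real.exp_nat_mul, Real.exp_log hc]

lemma tendsto_log_div_natCast_atTop : Tendsto (fun n : ℕ => Real.log n / n) atTop (𝓝 0) := by
  simpa [Function.comp_def] using
    (Real.tendsto_pow_log_div_mul_add_atTop 1 0 1 one_ne_zero).comp tendsto_natCast_atTop_atTop

lemma div_log_div_mul_log {n : ℕ} (hn : 1 < n) (x : ℝ) :
    x / (Real.log n / n) * Real.log n = x * n := by
  have : 0 < Real.log n := Real.log_pos (by exact_mod_cast hn)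
  field_simp

lemma tendsto_zero_of_div_log_div_tendsto_zero {p : ℕ → ℝ}
    (h : Tendsto (fun n => p n / (Real.log n / n)) atTop (𝓝 0)) : Tendsto p atTop (𝓝 0) := by
  have := h.mul tendsto_log_div_natCast_atTop
  rw [zero_mul] at this
  refine this.congr' ?_
  filter_upwards [eventually_gt_atTop 1] with n hn
  have : 0 < Real.log n / n := div_pos (Real.log_pos (by exact_mod_cast hn)) (by positivity)
  exact div_mul_cancel₀ _ this.ne'

lemma tendsto_mul_one_sub_pow_atTop {p : ℕ → ℝ} (hp0 : ∀ n, 0 ≤ p n)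
    (h : Tendsto (fun n => p n / (Real.log n / n)) atTop (𝓝 0)) :
    Tendsto (fun n : ℕ => n * (1 - p n) ^ (n - 1)) atTop atTop := by
  have hp := tendsto_zero_of_div_log_div_tendsto_zero h
  have hq : Tendsto (fun n => 1 - p n) atTop (𝓝 1) := by simpa using tendsto_const_nhds.sub hp
  have hexp := (Real.tendsto_log_atTop.comp tendsto_natCast_atTop_atTop).atTop_mul_pos one_pos
    (by simpa using tendsto_const_nhds.sub (h.div hq one_ne_zero))
  refine tendsto_atTop_mono' _ ?_ (Real.tendsto_exp_atTop.comp hexp)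
  filter_upwards [eventually_gt_atTop 1, hp.eventually (gt_mem_nhds one_pos)] with n hn hpn
  have hn0 : (0 : ℝ) < n := by positivity
  calc Real.exp (Real.log n * (1 - p n / (Real.log n / n) / (1 - p n)))
      = n * Real.exp (-(n * p n / (1 - p n))) := by
        rw [mul_sub, mul_one, mul_div_assoc', mul_comm (Real.log n), div_log_div_mul_log hn,
          sub_eq_add_neg, Real.exp_add, Real.exp_log hn0, mul_comm (p n)]
    _ ≤ n * (1 - p n) ^ n := by
        gcongr
        exact exp_neg_mul_div_one_sub_le_one_sub_pow hpn n
    _ ≤ n * (1 - p n) ^ (n - 1) := by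
        refine mul_le_mul_of_nonneg_left ?_ hn0.le
        exact pow_le_pow_of_le_one (sub_pos.2 hpn).le (sub_le_self _ (hp0 n)) (Nat.sub_le n 1)

theorem tendsto_erProb_connected_zero {p : ℕ → ℝ} (hp0 : ∀ n, 0 ≤ p n)
    (h : Tendsto (fun n => p n / (Real.log n / n)) atTop (𝓝 0)) :
    Tendsto (fun n => erProb n (p n) fun G => G.Connected) atTop (𝓝 0) := by
  have hp := tendsto_zero_of_div_log_div_tendsto_zero h
  have hp1 : ∀ᶠ n in atTop, p n < 1 := hp.eventually (gt_mem_nhds one_pos)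
  have hq : Tendsto (fun n => 1 - p n) atTop (𝓝 1) := by simpa using tendsto_const_nhds.sub hp
  have hbound : Tendsto (fun n : ℕ => (n * (1 - p n) ^ (n - 1))⁻¹ + ((1 - p n) ^ 2)⁻¹ - 1)
      atTop (𝓝 0) := by
    simpa using ((tendsto_mul_one_sub_pow_atTop hp0 h).inv_tendsto_atTop.add
      ((hq.pow 2).inv₀ (by norm_num))).sub_const 1
  refine tendsto_of_tendsto_of_tendsto_of_le_of_le' tendsto_const_nhds hbound ?_ ?_
  · filter_upwards [hp1] with n hpn using erProb_nonneg (hp0 n) hpn.le _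
  · filter_upwards [eventually_ge_atTop 2, hp1] with n hn hpn
    exact erProb_connected_le hn (hp0 n) hpn

lemma tendsto_mul_exp_neg_mul_div_two {p : ℕ → ℝ}
    (h : Tendsto (fun n => p n / (Real.log n / n)) atTop atTop) :
    Tendsto (fun n : ℕ => n * Real.exp (-(p n * n) / 2)) atTop (𝓝 0) := by
  have hexp := (Real.tendsto_log_atTop.comp tendsto_natCast_atTop_atTop).atTop_mul_atBot₀
    (tendsto_atBot_add_const_left _ 1 (tendsto_neg_atTop_atBot.comp (h.atTop_div_const two_pos)))
  refine (Real.tendsto_exp_atBot.comp hexp).congr' ?_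
  filter_upwards [eventually_gt_atTop 1] with n hn
  have hn0 : (0 : ℝ) < n := by positivity
  simp only [Function.comp_apply]
  rw [mul_add, mul_one, mul_neg, mul_comm (Real.log n), div_mul_eq_mul_div,
    div_log_div_mul_log hn, Real.exp_add, Real.exp_log hn0, neg_div]

theorem tendsto_erProb_connected_one {p : ℕ → ℝ} (hp : ∀ n, 0 ≤ p n ∧ p n ≤ 1)
    (h : Tendsto (fun n => p n / (Real.log n / n)) atTop atTop) :
    Tendsto (fun n => erProb n (p n) fun G => G.Connected) atTop (𝓝 1) := by
  have hbound : Tendsto (fun n : ℕ => Real.exp (n * Real.exp (-(p n * n) / 2)) - 1)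
      atTop (𝓝 0) := by
    simpa using
      ((Real.continuous_exp.tendsto 0).comp (tendsto_mul_exp_neg_mul_div_two h)).sub_const 1
  have hdisconnected :
      Tendsto (fun n => erProb n (p n) fun G => ¬ G.Connected) atTop (𝓝 0) := by
    refine tendsto_of_tendsto_of_tendsto_of_le_of_le' tendsto_const_nhds hbound
      (Eventually.of_forall fun n => erProb_nonneg (hp n).1 (hp n).2 _) ?_
    filter_upwards [eventually_gt_atTop 0] with n hn
    exact erProb_not_connected_le hn (hp n).1 (hp n).2
  simpa [erProb_not] using hdisconnected.const_sub 1

/-- **Erdős–Rényi**: `p₀(n) = log n / n` is a threshold function for `G_{n,p}` to be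
connected (equivalently, to contain a spanning tree). -/
theorem connectivity_threshold (p : ℕ → ℝ) (hp : ∀ n, 0 ≤ p n ∧ p n ≤ 1) :
    (Filter.Tendsto (fun n => p n / (Real.log n / n)) Filter.atTop (nhds 0) →
      Filter.Tendsto (fun n => erProb n (p n) (fun G => G.Connected))
        Filter.atTop (nhds 0)) ∧
    (Filter.Tendsto (fun n => p n / (Real.log n / n)) Filter.atTop Filter.atTop →
      Filter.Tendsto (fun n => erProb n (p n) (fun G => G.Connected))
        Filter.atTop (nhds 1)) :=
  ⟨tendsto_erProb_connected_zero fun n => (hp n).1, tendsto_erProb_connected_one hp⟩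
end
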